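/- Let H be a separable infinite-dimensional complex Hilbert space. The norm closure of the set of pseudo B-Weyl operators on H equals the norm closure of the set of B-Weyl operators on H. -/

import Mathlib

open Filter Set ContinuousLinearMap

noncomputable section

namespace PBW

variable {X : Type*} [NormedAddCommGroup X] [NormedSpace ℂ X]

/-- Restriction of an operator to an invariant subspace, as a continuous linear map. -/
def restrictOp (T : X →L[ℂ] X) (U : Submodule ℂ X) (h : ∀ x ∈ U, T x ∈ U) : U →L[ℂ] U :=
  ⟨(T : X →ₗ[ℂ] X).restrict h,
    (T.continuous.comp continuous_subtype_val).subtype_mk _⟩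

/-- A quasi-nilpotent operator: its spectrum is contained in `{0}`. -/
def IsQuasinilpotentOp {Z : Type*} [NormedAddCommGroup Z] [NormedSpace ℂ Z]
    (T : Z →L[ℂ] Z) : Prop := spectrum ℂ T ⊆ {0}

/-- A Weyl operator : Fredholm of index zero. -/
def IsWeylOp {Z : Type*} [NormedAddCommGroup Z] [NormedSpace ℂ Z]
    (T : Z →L[ℂ] Z) : Prop :=
  FiniteDimensional ℂ (LinearMap.ker (T : Z →ₗ[ℂ] Z)) ∧
    IsClosed (LinearMap.range (T : Z →ₗ[ℂ] Z) : Set Z) ∧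
    FiniteDimensional ℂ (Z ⧸ LinearMap.range (T : Z →ₗ[ℂ] Z)) ∧
    Module.finrank ℂ (LinearMap.ker (T : Z →ₗ[ℂ] Z)) =
      Module.finrank ℂ (Z ⧸ LinearMap.range (T : Z →ₗ[ℂ] Z))

/-- A pseudo B-Weyl operator: direct sum of a Weyl operator and a quasi-nilpotent one. -/
def IsPseudoBWeyl (T : X →L[ℂ] X) : Prop :=
  ∃ (X₁ X₂ : Submodule ℂ X) (h₁ : ∀ x ∈ X₁, T x ∈ X₁) (h₂ : ∀ x ∈ X₂, T x ∈ X₂),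
    IsClosed (X₁ : Set X) ∧ IsClosed (X₂ : Set X) ∧ IsCompl X₁ X₂ ∧
    IsWeylOp (restrictOp T X₁ h₁) ∧ IsQuasinilpotentOp (restrictOp T X₂ h₂)

/-- A B-Weyl operator: direct sum of a Weyl operator and a nilpotent one. -/
def IsBWeyl (T : X →L[ℂ] X) : Prop :=
  ∃ (X₁ X₂ : Submodule ℂ X) (h₁ : ∀ x ∈ X₁, T x ∈ X₁) (h₂ : ∀ x ∈ X₂, T x ∈ X₂),
    IsClosed (X₁ : Set X) ∧ IsClosed (X₂ : Set X) ∧ IsCompl X₁ X₂ ∧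
    IsWeylOp (restrictOp T X₁ h₁) ∧ IsNilpotent (restrictOp T X₂ h₂)

/-- The pseudo B-Weyl spectrum. -/
def pBWSpectrum (T : X →L[ℂ] X) : Set ℂ := {l | ¬ IsPseudoBWeyl (T - l • 1)}

/-- The generalized Drazin spectrum: accumulation points of the spectrum. -/
def gDSpectrum (T : X →L[ℂ] X) : Set ℂ := {l | AccPt l (𝓟 (spectrum ℂ T))}

/-- SVEP at a point. -/
def HasSVEPAt (T : X →L[ℂ] X) (l : ℂ) : Prop :=
  ∀ U : Set ℂ, IsOpen U → l ∈ U → ∀ f : ℂ → X, AnalyticOnNhd ℂ f U →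
    (∀ μ ∈ U, (T - μ • 1) (f μ) = 0) → ∀ μ ∈ U, f μ = 0

/-- The set where `T` fails SVEP. -/
def svepFail (T : X →L[ℂ] X) : Set ℂ := {l | ¬ HasSVEPAt T l}

/-- The Banach space adjoint (dual operator) of `T`. -/
def dualOp (T : X →L[ℂ] X) :
    StrongDual ℂ X →L[ℂ] StrongDual ℂ X :=
  (ContinuousLinearMap.compL ℂ X X ℂ).flip T

/-- The left spectrum. -/
def leftSpectrum (T : X →L[ℂ] X) : Set ℂ :=
  {l | ¬ ∃ S : X →L[ℂ] X, S * (T - l • 1) = 1}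

/-- The right spectrum. -/
def rightSpectrum (T : X →L[ℂ] X) : Set ℂ :=
  {l | ¬ ∃ S : X →L[ℂ] X, (T - l • 1) * S = 1}

/-- The left generalized Drazin spectrum. -/
def lgDSpectrum (T : X →L[ℂ] X) : Set ℂ := {l | AccPt l (𝓟 (leftSpectrum T))}

/-- The right generalized Drazin spectrum. -/
def rgDSpectrum (T : X →L[ℂ] X) : Set ℂ := {l | AccPt l (𝓟 (rightSpectrum T))}

variable {Y : Type*} [NormedAddCommGroup Y] [NormedSpace ℂ Y]

/-- The upper triangular operator matrix `M_C` on `X × Y`. -/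
def MC (A : X →L[ℂ] X) (B : Y →L[ℂ] Y) (C : Y →L[ℂ] X) : (X × Y) →L[ℂ] (X × Y) :=
  (A.comp (ContinuousLinearMap.fst ℂ X Y) + C.comp (ContinuousLinearMap.snd ℂ X Y)).prod
    (B.comp (ContinuousLinearMap.snd ℂ X Y))

end PBW


namespace PBWAux

open PBW

variable {Z : Type*} [NormedAddCommGroup Z] [NormedSpace ℂ Z]
variable {W : Type*} [NormedAddCommGroup W] [NormedSpace ℂ W]

/-- A nilpotent operator is quasinilpotent. -/
theorem quasinil_of_nilpotent {N : Z →L[ℂ] Z} (hN : IsNilpotent N) :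
    IsQuasinilpotentOp N := by
  intro l hl
  by_contra hne
  simp only [Set.mem_singleton_iff] at hne
  rw [spectrum.mem_iff] at hl
  apply hl
  have h1 : IsNilpotent (l⁻¹ • N) := hN.smul _
  have h2 : IsUnit (1 - l⁻¹ • N) := h1.isUnit_one_sub
  have h3 : IsUnit (algebraMap ℂ (Z →L[ℂ] Z) l) :=
    (isUnit_iff_ne_zero.mpr hne).map (algebraMap ℂ (Z →L[ℂ] Z))
  have key : algebraMap ℂ (Z →L[ℂ] Z) l - N
      = algebraMap ℂ (Z →L[ℂ] Z) l * (1 - l⁻¹ • N) := by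
    rw [mul_sub, mul_one, ← Algebra.smul_def, smul_smul, mul_inv_cancel₀ hne, one_smul]
  rw [key]
  exact h3.mul h2

/-- Transport of the Weyl property across a continuous linear equivalence. -/
theorem isWeylOp_congr (u : Z ≃L[ℂ] W) {A : Z →L[ℂ] Z} {B : W →L[ℂ] W}
    (hB : ∀ z, B (u z) = u (A z)) (hA : IsWeylOp A) : IsWeylOp B := by
  obtain ⟨hk, hr, hq, hf⟩ := hA
  have hBx : ∀ x : W, B x = u (A (u.symm x)) := fun x => by
    conv_lhs => rw [← u.apply_symm_apply x]
    exact hB _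
  have hker : LinearMap.ker (B : W →ₗ[ℂ] W) = (LinearMap.ker (A : Z →ₗ[ℂ] Z)).map (u : Z →ₗ[ℂ] W) := by
    ext x
    simp only [LinearMap.mem_ker, Submodule.mem_map, ContinuousLinearMap.coe_coe,
      ContinuousLinearEquiv.coe_coe]
    constructor
    · intro hx
      refine ⟨u.symm x, ?_, u.apply_symm_apply x⟩
      have := hBx x
      rw [hx] at this
      have : u (A (u.symm x)) = u 0 := by rw [← this, map_zero]
      simpa using u.injective this
    · rintro ⟨z, hz, rfl⟩
      exact (hB z).trans (by rw [hz, map_zero])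
  have hrange : LinearMap.range (B : W →ₗ[ℂ] W) = (LinearMap.range (A : Z →ₗ[ℂ] Z)).map (u : Z →ₗ[ℂ] W) := by
    ext x
    simp only [LinearMap.mem_range, Submodule.mem_map, ContinuousLinearMap.coe_coe,
      ContinuousLinearEquiv.coe_coe]
    constructor
    · rintro ⟨y, rfl⟩
      exact ⟨A (u.symm y), ⟨u.symm y, rfl⟩, (hBx y).symm⟩
    · rintro ⟨z, ⟨w, rfl⟩, rfl⟩
      exact ⟨u w, hB w⟩
  have ekermap := (LinearMap.ker (A : Z →ₗ[ℂ] Z)).equivMapOfInjective (u : Z →ₗ[ℂ] W)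
    (by exact u.injective)
  have erangequot : (Z ⧸ LinearMap.range (A : Z →ₗ[ℂ] Z)) ≃ₗ[ℂ] (W ⧸ LinearMap.range (B : W →ₗ[ℂ] W)) :=
    Submodule.Quotient.equiv _ _ u.toLinearEquiv hrange.symm
  refine ⟨?_, ?_, ?_, ?_⟩
  · rw [hker]; exact Module.Finite.equiv ekermap
  · have : (LinearMap.range (B : W →ₗ[ℂ] W) : Set W) = u '' (LinearMap.range (A : Z →ₗ[ℂ] Z) : Set Z) := by
      rw [hrange]; rfl
    rw [this]
    exact u.toHomeomorph.isClosedMap _ hr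
  · exact Module.Finite.equiv erangequot
  · rw [hker, ← LinearEquiv.finrank_eq ekermap, hf, LinearEquiv.finrank_eq erangequot]

/-- `p.prod ⊥ ≃ p`. -/
def prodBotEquiv (p : Submodule ℂ Z) :
    (p.prod (⊥ : Submodule ℂ W)) ≃ₗ[ℂ] p where
  toFun z := ⟨z.val.1, z.prop.1⟩
  invFun x := ⟨(x.val, 0), ⟨x.prop, Submodule.zero_mem _⟩⟩
  map_add' _ _ := rfl
  map_smul' _ _ := rfl
  left_inv z := by
    apply Subtype.ext
    apply Prod.ext
    · rfl
    · exact ((Submodule.mem_bot ℂ).mp z.prop.2).symm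
  right_inv x := rfl

theorem ker_eq_of_unit {B : W →L[ℂ] W} (hB : IsUnit B) :
    LinearMap.ker (B : W →ₗ[ℂ] W) = ⊥ := by
  obtain ⟨u, rfl⟩ := hB
  rw [LinearMap.ker_eq_bot']
  intro x hx
  have : (↑u⁻¹ * ↑u : W →L[ℂ] W) x = (↑u⁻¹ : W →L[ℂ] W) ((u : W →L[ℂ] W) x) := rfl
  rw [u.inv_mul] at this
  rw [show (u : W →L[ℂ] W) x = 0 from hx, map_zero] at this
  simpa using this

theorem range_eq_of_unit {B : W →L[ℂ] W} (hB : IsUnit B) :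
    LinearMap.range (B : W →ₗ[ℂ] W) = ⊤ := by
  obtain ⟨u, rfl⟩ := hB
  rw [LinearMap.range_eq_top]
  intro x
  refine ⟨(↑u⁻¹ : W →L[ℂ] W) x, ?_⟩
  have : (↑u * ↑u⁻¹ : W →L[ℂ] W) x = (u : W →L[ℂ] W) ((↑u⁻¹ : W →L[ℂ] W) x) := rfl
  rw [u.mul_inv] at this
  simpa using this.symm

/-- `A ⊕ B` with `A` Weyl and `B` invertible is Weyl. -/
theorem isWeylOp_prodMap {A : Z →L[ℂ] Z} {B : W →L[ℂ] W}
    (hA : IsWeylOp A) (hB : IsUnit B) : IsWeylOp (A.prodMap B) := by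
  obtain ⟨hk, hr, hq, hf⟩ := hA
  have hker : LinearMap.ker ((A.prodMap B : Z × W →L[ℂ] Z × W) : Z × W →ₗ[ℂ] Z × W)
      = (LinearMap.ker (A : Z →ₗ[ℂ] Z)).prod (⊥ : Submodule ℂ W) := by
    rw [← ker_eq_of_unit hB]
    exact LinearMap.ker_prodMap (A : Z →ₗ[ℂ] Z) (B : W →ₗ[ℂ] W)
  have hrange : LinearMap.range ((A.prodMap B : Z × W →L[ℂ] Z × W) : Z × W →ₗ[ℂ] Z × W)
      = (LinearMap.range (A : Z →ₗ[ℂ] Z)).prod (⊤ : Submodule ℂ W) := by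
    ext x
    simp only [LinearMap.mem_range, Submodule.mem_prod, Submodule.mem_top, and_true]
    constructor
    · rintro ⟨y, rfl⟩
      exact ⟨y.1, rfl⟩
    · rintro ⟨a, ha⟩
      obtain ⟨b, hb⟩ := LinearMap.range_eq_top.mp (range_eq_of_unit hB) x.2
      exact ⟨(a, b), Prod.ext ha hb⟩
  have ekermap := prodBotEquiv (W := W) (LinearMap.ker (A : Z →ₗ[ℂ] Z))
  have hsurj : Function.Surjective
      ((LinearMap.range (A : Z →ₗ[ℂ] Z)).mkQ.comp (LinearMap.fst ℂ Z W)) :=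
    (Submodule.mkQ_surjective _).comp Prod.fst_surjective
  have hkerf : LinearMap.ker ((LinearMap.range (A : Z →ₗ[ℂ] Z)).mkQ.comp (LinearMap.fst ℂ Z W))
      = (LinearMap.range (A : Z →ₗ[ℂ] Z)).prod (⊤ : Submodule ℂ W) := by
    ext x
    simp [Submodule.Quotient.mk_eq_zero]
  have equot : ((Z × W) ⧸ LinearMap.range ((A.prodMap B : Z × W →L[ℂ] Z × W) : Z × W →ₗ[ℂ] Z × W)) ≃ₗ[ℂ] (Z ⧸ LinearMap.range (A : Z →ₗ[ℂ] Z)) :=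
    (Submodule.quotEquivOfEq _ _ (hrange.trans hkerf.symm)).trans
      (LinearMap.quotKerEquivOfSurjective _ hsurj)
  refine ⟨?_, ?_, ?_, ?_⟩
  · rw [hker]; exact Module.Finite.equiv ekermap.symm
  · have : (LinearMap.range ((A.prodMap B : Z × W →L[ℂ] Z × W) : Z × W →ₗ[ℂ] Z × W) : Set (Z × W))
        = (LinearMap.range (A : Z →ₗ[ℂ] Z) : Set Z) ×ˢ (Set.univ : Set W) := by
      rw [hrange]; rfl
    rw [this]
    exact hr.prod isClosed_univ
  · exact Module.Finite.equiv equot.symm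
  · rw [hker, LinearEquiv.finrank_eq ekermap, hf, ← LinearEquiv.finrank_eq equot]

/-- The identification of `⊤` with the whole space, as a continuous linear equiv. -/
def topCLE : (⊤ : Submodule ℂ Z) ≃L[ℂ] Z :=
  ⟨Submodule.topEquiv, continuous_subtype_val, continuous_id.subtype_mk _⟩

theorem isBWeyl_of_isWeylOp {S : Z →L[ℂ] Z} (hS : IsWeylOp S) : IsBWeyl S := by
  refine ⟨⊤, ⊥, fun x _ => trivial, fun x hx => ?_, ?_, ?_, isCompl_top_bot, ?_, ?_⟩
  · rw [Submodule.mem_bot] at hx ⊢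
    rw [hx, map_zero]
  · rw [Submodule.top_coe]; exact isClosed_univ
  · rw [Submodule.bot_coe]; exact isClosed_singleton
  · refine isWeylOp_congr (topCLE (Z := Z)).symm (A := S) ?_ hS
    intro z
    apply Subtype.ext
    rfl
  · refine ⟨1, ?_⟩
    rw [pow_one]
    ext x

theorem mul_div_lt {c x : ℝ} (hc : 0 ≤ c) (hx : 0 < x) : c * (x / (c + 1)) < x := by
  rw [mul_comm, div_mul_eq_mul_div, div_lt_iff₀ (by linarith : (0:ℝ) < c + 1)]
  nlinarith

end PBWAux

/-- on a separable infinite-dimensional Hilbert space, the norm closure of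
the pseudo B-Weyl operators equals the norm closure of the B-Weyl operators. -/
theorem stmt18 {H : Type*} [NormedAddCommGroup H] [InnerProductSpace ℂ H] [CompleteSpace H]
    [TopologicalSpace.SeparableSpace H] (h : ¬ FiniteDimensional ℂ H) :
    closure {T : H →L[ℂ] H | PBW.IsPseudoBWeyl T} =
      closure {T : H →L[ℂ] H | PBW.IsBWeyl T} := by
  apply subset_antisymm
  · refine closure_minimal ?_ isClosed_closure
    rintro T ⟨X₁, X₂, h₁, h₂, hc₁, hc₂, hcompl, hW, hQ⟩
    haveI : CompleteSpace X₁ := hc₁.completeSpace_coe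
    haveI : CompleteSpace X₂ := hc₂.completeSpace_coe
    set T₁ := PBW.restrictOp T X₁ h₁ with hT₁
    set T₂ := PBW.restrictOp T X₂ h₂ with hT₂
    have hcont : Continuous (Submodule.prodEquivOfIsCompl X₁ X₂ hcompl) := by
      have hfun : ⇑(Submodule.prodEquivOfIsCompl X₁ X₂ hcompl)
          = fun p : X₁ × X₂ => (p.1 : H) + (p.2 : H) :=
        funext fun p => Submodule.coe_prodEquivOfIsCompl' X₁ X₂ hcompl p
      rw [hfun]
      exact (continuous_subtype_val.comp continuous_fst).add
        (continuous_subtype_val.comp continuous_snd)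
    set e := (Submodule.prodEquivOfIsCompl X₁ X₂ hcompl).toContinuousLinearEquivOfContinuous
      hcont with he
    have he_apply : ∀ p : X₁ × X₂, e p = (p.1 : H) + (p.2 : H) := fun p =>
      Submodule.coe_prodEquivOfIsCompl' X₁ X₂ hcompl p
    set eC := (e : (X₁ × X₂) →L[ℂ] H) with heC
    set eC' := (e.symm : H →L[ℂ] (X₁ × X₂)) with heC'
    have key : ∀ p : X₁ × X₂, T (e p) = e (T₁ p.1, T₂ p.2) := by
      intro p
      rw [he_apply, he_apply]
      show T ((p.1 : H) + (p.2 : H)) = ((T₁ p.1 : H) + (T₂ p.2 : H))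
      rw [map_add]
      rfl
    rw [Metric.mem_closure_iff]
    intro ε hε
    set C := ‖eC‖ * ‖eC'‖ with hC
    have hC0 : 0 ≤ C := mul_nonneg (norm_nonneg _) (norm_nonneg _)
    set δ : ℝ := ε / (C + 1) with hδ
    have hδpos : 0 < δ := div_pos hε (by linarith)
    have hδne : ((δ : ℝ) : ℂ) ≠ 0 := by
      exact_mod_cast ne_of_gt hδpos
    have hunit : IsUnit (T₂ - ((δ : ℝ) : ℂ) • 1) := by
      have h1 : ((δ : ℝ) : ℂ) ∉ spectrum ℂ T₂ := fun hmem => hδne (hQ hmem)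
      rw [spectrum.notMem_iff] at h1
      have h2 : T₂ - ((δ : ℝ) : ℂ) • 1
          = -(algebraMap ℂ (X₂ →L[ℂ] X₂) ((δ : ℝ) : ℂ) - T₂) := by
        rw [Algebra.algebraMap_eq_smul_one, neg_sub]
      rw [h2]
      exact h1.neg
    set D := T₁.prodMap (T₂ - ((δ : ℝ) : ℂ) • 1) with hD
    have hDW : PBW.IsWeylOp D := PBWAux.isWeylOp_prodMap hW hunit
    set S := eC.comp (D.comp eC') with hS
    have hSe : ∀ z, S (e z) = e (D z) := by
      intro z
      rw [hS]
      simp [heC, heC']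
    have hSW : PBW.IsWeylOp S := PBWAux.isWeylOp_congr e hSe hDW
    refine ⟨S, PBWAux.isBWeyl_of_isWeylOp hSW, ?_⟩
    rw [dist_eq_norm]
    set M := (0 : X₁ →L[ℂ] X₁).prodMap (((δ : ℝ) : ℂ) • (1 : X₂ →L[ℂ] X₂)) with hMdef
    have hTeq : T = eC.comp ((T₁.prodMap T₂).comp eC') := by
      ext x
      show T x = e ((T₁.prodMap T₂) (e.symm x))
      conv_lhs => rw [← e.apply_symm_apply x]
      exact key _
    have hMdiff : T₁.prodMap T₂ - D = M := by
      refine ContinuousLinearMap.ext fun p => ?_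
      simp [hMdef, hD, ContinuousLinearMap.sub_apply, Prod.ext_iff,
        ContinuousLinearMap.coe_prodMap', ContinuousLinearMap.smul_apply,
        ContinuousLinearMap.one_apply, Prod.map, sub_sub_cancel]
    have hfact : T - S = eC.comp (M.comp eC') := by
      rw [← hMdiff, hTeq, hS]
      ext x
      simp [map_sub]
    have hM : ‖M‖ ≤ δ := by
      refine ContinuousLinearMap.opNorm_le_bound _ hδpos.le fun p => ?_
      have h1 : M p = ((0 : X₁), ((δ : ℝ) : ℂ) • p.2) := rfl
      rw [h1]
      have h2 : ‖((0 : X₁), ((δ : ℝ) : ℂ) • p.2)‖ = ‖((δ : ℝ) : ℂ) • p.2‖ := by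
        rw [Prod.norm_def, norm_zero]
        exact max_eq_right (norm_nonneg _)
      rw [h2, norm_smul, Complex.norm_real, Real.norm_of_nonneg hδpos.le]
      exact mul_le_mul_of_nonneg_left (norm_snd_le p) hδpos.le
    have hbound : ‖T - S‖ ≤ C * δ := by
      rw [hfact]
      calc ‖eC.comp (M.comp eC')‖
          ≤ ‖eC‖ * ‖M.comp eC'‖ := ContinuousLinearMap.opNorm_comp_le _ _
        _ ≤ ‖eC‖ * (‖M‖ * ‖eC'‖) :=
            mul_le_mul_of_nonneg_left (ContinuousLinearMap.opNorm_comp_le _ _)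
              (norm_nonneg _)
        _ ≤ ‖eC‖ * (δ * ‖eC'‖) :=
            mul_le_mul_of_nonneg_left
              (mul_le_mul_of_nonneg_right hM (norm_nonneg _)) (norm_nonneg _)
        _ = C * δ := by rw [hC]; ring
    have hfinal : C * δ < ε := by
      rw [hδ]
      exact PBWAux.mul_div_lt hC0 hε
    exact lt_of_le_of_lt hbound hfinal
  · refine closure_mono ?_
    rintro T ⟨X₁, X₂, h₁, h₂, hc₁, hc₂, hcompl, hW, hN⟩
    exact ⟨X₁, X₂, h₁, h₂, hc₁, hc₂, hcompl, hW, PBWAux.quasinil_of_nilpotent hN⟩
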